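/- arXiv:0909.5329 — 3 statements merged into one kernel-verified Lean document; each statement's English description precedes it below -/
import Mathlib

section
/- Every monomial ordering on the monomials of K[x_1,...,x_n] (a total ordering compatible with multiplication) can be represented as the ordering >_M induced by some invertible real n×n matrix M, where x^α >_M x^β iff Mα is lexicographically greater than Mβ in ℝ^n. -/
/-!
The monomial order extends to a group order on `ℤⁿ`: `v ≥ 0` iff `v = α - β` with `β ≤ α`.
By Hahn's embedding theorem this ordered group embeds into the lexicographically ordered Hahn
series `ℝ⟦Γ⟧` over its finite archimedean classes `Γ`. Each coefficient map is additive on `ℤⁿ`,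
hence a real row vector. An element of class `c` is killed by the rows of the classes below `c`
but not by the row of `c`, so these rows are linearly independent; in particular `Γ` has at most
`n` elements. The rows listed in increasing order of `Γ` and completed to a basis of `ℝⁿ` form `M`.
-/

/-- A monomial ordering on the monomials `x^α`, `α ∈ ℕ^n`: a (strict) total ordering
compatible with multiplication of monomials (addition of exponent vectors). -/
structure MonOrd (n : ℕ) where
  lt : (Fin n →₀ ℕ) → (Fin n →₀ ℕ) → Prop
  irrefl : ∀ a, ¬ lt a a
  trans : ∀ a b c, lt a b → lt b c → lt a c
  total : ∀ a b : Fin n →₀ ℕ, a ≠ b → lt a b ∨ lt b a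
  add_compat : ∀ a b c, lt a b → lt (c + a) (c + b)

open Matrix

theorem AddMonoidHom.apply_eq_dotProduct_intCast {ι R : Type*} [Fintype ι] [DecidableEq ι]
    [CommRing R] (φ : (ι → ℤ) →+ R) (v : ι → ℤ) :
    φ v = (fun j => φ (Pi.single j 1)) ⬝ᵥ fun j => (v j : R) := by
  conv_lhs => rw [← Finset.univ_sum_single v]
  simp only [map_sum, dotProduct]
  refine Finset.sum_congr rfl fun j _ => ?_
  rw [show (Pi.single j (v j) : ι → ℤ) = v j • Pi.single j 1 by
    rw [← Pi.single_smul', smul_eq_mul, mul_one], map_zsmul, zsmul_eq_mul, mul_comm]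

theorem linearIndependent_of_triangular {ι K V : Type*} [LinearOrder ι] [Field K]
    [AddCommGroup V] [Module K V] {v : ι → V} (t : ι → Module.Dual K V)
    (hdiag : ∀ i, t i (v i) ≠ 0) (hlt : ∀ i j, j < i → t i (v j) = 0) :
    LinearIndependent K v := by
  classical
  rw [linearIndependent_iff']
  intro s g hsum i hi
  by_contra hgi
  set s' := s.filter (g · ≠ 0)
  have hs' : s'.Nonempty := ⟨i, Finset.mem_filter.mpr ⟨hi, hgi⟩⟩
  obtain ⟨hm, hgm⟩ := Finset.mem_filter.mp (s'.max'_mem hs')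
  set m := s'.max' hs'
  -- applying `t m` to the relation leaves only the term of its largest index `m`
  have := congrArg (t m) hsum
  rw [map_sum, map_zero, Finset.sum_eq_single m] at this
  · simp only [map_smul, smul_eq_mul, mul_eq_zero] at this
    exact this.elim hgm (hdiag m)
  · intro j hj hjm
    rcases eq_or_ne (g j) 0 with h | h
    · simp [h]
    · have hjm' : j < m := lt_of_le_of_ne (s'.le_max' j (Finset.mem_filter.mpr ⟨hj, h⟩)) hjm
      simp [hlt m j hjm']
  · exact fun h => absurd hm h

theorem Pi.toLex_lt_toLex_iff_comp {ι κ β : Type*} [LinearOrder ι] [LinearOrder κ] [Preorder β]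
    (e : κ ↪o ι) (he : IsLowerSet (Set.range e)) {x y : ι → β} (hxy : x ∘ e = y ∘ e → x = y) :
    toLex x < toLex y ↔ toLex (x ∘ e) < toLex (y ∘ e) := by
  constructor
  · rintro ⟨i, hlt, hi⟩
    by_cases hie : i ∈ Set.range e
    · obtain ⟨c, rfl⟩ := hie
      exact ⟨c, fun d hd => hlt _ (e.lt_iff_lt.mpr hd), hi⟩
    · have : x = y := hxy <| funext fun c => hlt _ <| lt_of_not_ge fun hle => hie (he hle ⟨c, rfl⟩)
      exact absurd hi (this ▸ lt_irrefl _)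
  · rintro ⟨c, hlt, hc⟩
    refine ⟨e c, fun j hj => ?_, hc⟩
    obtain ⟨d, rfl⟩ := he hj.le ⟨c, rfl⟩
    exact hlt d (e.lt_iff_lt.mp hj)

theorem LinearIndependent.exists_extend_fin {K V : Type*} [DivisionRing K] [AddCommGroup V]
    [Module K V] {k N : ℕ} {v : Fin k → V} (hv : LinearIndependent K v) (hkN : k ≤ N)
    (hN : N ≤ Module.finrank K V) :
    ∃ w : Fin N → V, LinearIndependent K w ∧ ∀ i, w (Fin.castLE hkN i) = v i := by
  induction N, hkN using Nat.le_induction with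
  | base => exact ⟨v, hv, fun i => rfl⟩
  | succ N hkN ih =>
    obtain ⟨w, hw, hwv⟩ := ih (Nat.le_of_succ_le hN)
    obtain ⟨x, hx⟩ := exists_linearIndependent_snoc_of_lt_finrank hw hN
    exact ⟨Fin.snoc w x, hx, fun i => (Fin.snoc_castSucc (α := fun _ => V) ..).trans (hwv i)⟩

theorem exists_matrix_lex_embedding {n : ℕ} {G : Type*} [AddCommGroup G] [LinearOrder G]
    [IsOrderedAddMonoid G] (e : G ≃+ (Fin n → ℤ)) :
    ∃ (k : ℕ) (A : Matrix (Fin k) (Fin n) ℝ), LinearIndependent ℝ A.row ∧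
      Function.Injective (fun u : G => A *ᵥ fun j => (e u j : ℝ)) ∧
      ∀ u v : G, u < v ↔ toLex (A *ᵥ fun j => (e u j : ℝ)) < toLex (A *ᵥ fun j => (e v j : ℝ)) := by
  obtain ⟨f, hf_inj, hf_mk⟩ := hahnEmbedding_isOrderedAddMonoid G
  set x : G → Fin n → ℝ := fun u j => (e u j : ℝ)
  let coeffHom (c : FiniteArchimedeanClass G) : (Fin n → ℤ) →+ ℝ :=
    AddMonoidHom.mk' (fun v => (ofLex (f (e.symm v))).coeff c) fun a b => by simp
  set row : FiniteArchimedeanClass G → Fin n → ℝ := fun c j => coeffHom c (Pi.single j 1)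
  have hcoeff (u : G) (c) : (ofLex (f u)).coeff c = row c ⬝ᵥ x u :=
    calc (ofLex (f u)).coeff c = coeffHom c (e u) := by simp [coeffHom]
      _ = row c ⬝ᵥ x u := (coeffHom c).apply_eq_dotProduct_intCast (e u)
  have horder (c : FiniteArchimedeanClass G) : (ofLex (f c.1.out)).orderTop = c := by
    apply (FiniteArchimedeanClass.withTopOrderIso G).injective
    rw [← hf_mk, ArchimedeanClass.mk_out, FiniteArchimedeanClass.withTopOrderIso_apply_coe]
  have hrow : LinearIndependent ℝ row := by
    refine linearIndependent_of_triangular (fun c => dotProductEquiv ℝ (Fin n) (x c.1.out))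
      (fun c => ?_) (fun c d hdc => ?_)
    · rw [dotProductEquiv_apply_apply, dotProduct_comm, ← hcoeff]
      exact HahnSeries.coeff_orderTop_ne (horder c)
    · rw [dotProductEquiv_apply_apply, dotProduct_comm, ← hcoeff]
      exact HahnSeries.coeff_eq_zero_of_lt_orderTop ((horder c).symm ▸ WithTop.coe_lt_coe.mpr hdc)
  have : Finite (FiniteArchimedeanClass G) := hrow.finite
  have := Fintype.ofFinite (FiniteArchimedeanClass G)
  let σ := monoEquivOfFin (FiniteArchimedeanClass G) rfl
  have hmulVec (u : G) : Matrix.of (row ∘ σ) *ᵥ x u = (fun c => (ofLex (f u)).coeff c) ∘ σ :=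
    funext fun i => (hcoeff u (σ i)).symm
  refine ⟨_, Matrix.of (row ∘ σ), hrow.comp σ σ.injective, fun u v huv => ?_, fun u v => ?_⟩
  · refine hf_inj (HahnSeries.ext (funext fun c => ?_))
    have := congrFun ((hmulVec u).symm.trans (huv.trans (hmulVec v))) (σ.symm c)
    simp only [Function.comp_apply, OrderIso.apply_symm_apply] at this
    exact this
  · rw [hmulVec, hmulVec]
    refine ((OrderHomClass.monotone f).strictMono_of_injective hf_inj).lt_iff_lt.symm.trans ?_
    exact Pi.toLex_lt_toLex_iff_comp σ.toOrderEmbedding (by simpa using isLowerSet_univ)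
      fun h => σ.surjective.injective_comp_right h

namespace MonOrd

variable {n : ℕ} (o : MonOrd n)

protected def le (a b : Fin n →₀ ℕ) : Prop := o.lt a b ∨ a = b

theorem lt_asymm {a b : Fin n →₀ ℕ} (h : o.lt a b) : ¬ o.lt b a :=
  fun h' => o.irrefl a (o.trans _ _ _ h h')

theorem add_lt_add_iff_left (c : Fin n →₀ ℕ) {a b : Fin n →₀ ℕ} :
    o.lt (c + a) (c + b) ↔ o.lt a b := by
  refine ⟨fun h => ?_, o.add_compat a b c⟩
  rcases eq_or_ne a b with rfl | hab
  · exact absurd h (o.irrefl _)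
  · exact (o.total a b hab).resolve_right fun hba => o.lt_asymm h (o.add_compat b a c hba)

theorem add_le_add {a b c d : Fin n →₀ ℕ} (hab : o.le a b) (hcd : o.le c d) :
    o.le (a + c) (b + d) := by
  have add_right (c : Fin n →₀ ℕ) {a b} (h : o.lt a b) : o.lt (a + c) (b + c) := by
    rw [add_comm a, add_comm b]; exact o.add_compat a b c h
  rcases hab with hab | rfl <;> rcases hcd with hcd | rfl
  · exact Or.inl (o.trans _ _ _ (add_right c hab) (o.add_compat c d b hcd))
  · exact Or.inl (add_right c hab)
  · exact Or.inl (o.add_compat c d a hcd)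
  · exact Or.inr rfl

theorem lt_iff_lt_of_natCast_sub_eq {a b c d : Fin n →₀ ℕ}
    (h : (fun i => (a i : ℤ) - b i) = fun i => (c i : ℤ) - d i) : o.lt b a ↔ o.lt d c := by
  have h' : d + a = b + c := by
    ext i; have := congrFun h i; simp only [Finsupp.add_apply]; omega
  rw [← o.add_lt_add_iff_left d, h', ← o.add_lt_add_iff_left b (a := d), add_comm d b]

/-- A copy of `ℤⁿ`, the group of exponent differences `α - β`, to be ordered by `o`. -/
def ExpGroup (_ : MonOrd n) : Type := Fin n → ℤ

instance : AddCommGroup o.ExpGroup := inferInstanceAs (AddCommGroup (Fin n → ℤ))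

def expGroupEquiv : o.ExpGroup ≃+ (Fin n → ℤ) := AddEquiv.refl _

def nonnegCone : AddGroupCone o.ExpGroup where
  carrier := {v | ∃ a b, o.le b a ∧ o.expGroupEquiv v = fun i => (a i : ℤ) - b i}
  zero_mem' := ⟨0, 0, Or.inr rfl, by ext; simp⟩
  add_mem' := by
    rintro v w ⟨a, b, hba, hv⟩ ⟨c, d, hdc, hw⟩
    refine ⟨a + c, b + d, o.add_le_add hba hdc, ?_⟩
    rw [map_add, hv, hw]; ext i; simp only [Pi.add_apply, Finsupp.coe_add, Nat.cast_add]; ring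
  eq_zero_of_mem_of_neg_mem' := by
    rintro v ⟨a, b, hba, hv⟩ ⟨c, d, hdc, hw⟩
    rw [map_neg, hv] at hw
    rcases hba with hba | rfl
    · rcases hdc with hdc | rfl
      · refine absurd ((o.lt_iff_lt_of_natCast_sub_eq ?_).mpr hdc) (o.lt_asymm hba)
        rw [← hw]; ext i; simp
      · apply o.expGroupEquiv.injective
        rw [hv, map_zero, ← neg_eq_zero, hw]; ext; simp
    · apply o.expGroupEquiv.injective
      rw [hv, map_zero]; ext; simp

instance : HasMemOrNegMem o.nonnegCone where
  mem_or_neg_mem v := by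
    set a : Fin n →₀ ℕ := Finsupp.equivFunOnFinite.symm fun i => (o.expGroupEquiv v i).toNat
    set b : Fin n →₀ ℕ := Finsupp.equivFunOnFinite.symm fun i => (-o.expGroupEquiv v i).toNat
    have hv : o.expGroupEquiv v = fun i => (a i : ℤ) - b i := by ext i; simp [a, b]
    rcases eq_or_ne b a with hba | hba
    · exact Or.inl ⟨a, b, Or.inr hba, hv⟩
    rcases o.total b a hba with h | h
    · exact Or.inl ⟨a, b, Or.inl h, hv⟩
    · exact Or.inr ⟨b, a, Or.inl h, by rw [map_neg, hv]; ext; simp⟩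

noncomputable instance : LinearOrder o.ExpGroup := by
  classical exact LinearOrder.mkOfAddGroupCone o.nonnegCone

instance : IsOrderedAddMonoid o.ExpGroup := IsOrderedAddMonoid.mkOfCone o.nonnegCone

def toExpGroup (a : Fin n →₀ ℕ) : o.ExpGroup := o.expGroupEquiv.symm fun i => a i

theorem toExpGroup_injective : Function.Injective o.toExpGroup := fun a b h => by
  ext i; exact_mod_cast congrFun (o.expGroupEquiv.symm.injective h) i

theorem toExpGroup_lt_toExpGroup {a b : Fin n →₀ ℕ} :
    o.toExpGroup a < o.toExpGroup b ↔ o.lt a b := by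
  have hsub : o.expGroupEquiv (o.toExpGroup b - o.toExpGroup a) = fun i => (b i : ℤ) - a i := by
    simp only [toExpGroup, map_sub, AddEquiv.apply_symm_apply]; rfl
  rw [lt_iff_le_and_ne, Ne, o.toExpGroup_injective.eq_iff]
  constructor
  · rintro ⟨⟨c, d, hdc, h⟩, hab⟩
    rw [hsub] at h
    rcases hdc with hdc | rfl
    · exact (o.lt_iff_lt_of_natCast_sub_eq h).mpr hdc
    · refine absurd ?_ hab
      ext i; have := congrFun h i; simp only [sub_self] at this; omega
  · intro h
    exact ⟨⟨b, a, Or.inl h, hsub⟩, by rintro rfl; exact o.irrefl a h⟩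

end MonOrd

/-- Every monomial ordering is of the form `>_M` for an invertible real matrix `M`:
`x^α > x^β` iff `Mα` is lexicographically greater than `Mβ` in `ℝ^n`. -/
theorem monomial_order_eq_matrix_order {n : ℕ} (o : MonOrd n) :
    ∃ M : Matrix (Fin n) (Fin n) ℝ, IsUnit M ∧
      ∀ a b : Fin n →₀ ℕ, o.lt a b ↔
        toLex (M.mulVec fun i => (a i : ℝ)) < toLex (M.mulVec fun i => (b i : ℝ)) := by
  obtain ⟨k, A, hA, hinj, hlt⟩ := exists_matrix_lex_embedding o.expGroupEquiv
  have hk : k ≤ n := by simpa using hA.fintype_card_le_finrank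
  obtain ⟨w, hw, hwA⟩ := hA.exists_extend_fin hk (by simp)
  refine ⟨Matrix.of w, Matrix.linearIndependent_rows_iff_isUnit.mp hw, fun a b => ?_⟩
  have hM (a : Fin n →₀ ℕ) : (Matrix.of w *ᵥ fun i => (a i : ℝ)) ∘ Fin.castLEOrderEmb hk =
      A *ᵥ fun j => (o.expGroupEquiv (o.toExpGroup a) j : ℝ) :=
    funext fun i => by
      show w (Fin.castLE hk i) ⬝ᵥ _ = A i ⬝ᵥ _
      rw [hwA]; congr 1
  rw [← o.toExpGroup_lt_toExpGroup, hlt, Pi.toLex_lt_toLex_iff_comp (Fin.castLEOrderEmb hk) ?_ ?_]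
  · rw [hM, hM]
  · show IsLowerSet (Set.range (Fin.castLE hk))
    rw [Fin.range_castLE]
    exact fun i j (hji : j ≤ i) (hi : (i : ℕ) < k) => show (j : ℕ) < k from lt_of_le_of_lt hji hi
  · intro h
    rw [hM, hM] at h
    rw [o.toExpGroup_injective (hinj h)]
end

section
/- Let > be a local degree ordering on K[[x_1,...,x_n]]. Given a (possibly infinite) chain of reductions g → h_1 → h_2 → ... with respect to a subset G of the maximal ideal, where h_m = g − Σ_{i=1}^m a_i G^{α_i} and LM(a_1 G^{α_1}) > LM(a_2 G^{α_2}) > ..., the sequence of partial sums s_m = Σ_{i=1}^m a_i G^{α_i} converges in the 𝔪-adic topology of K[[x_1,...,x_n]]. -/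
/-- `o` is a local ordering: `x^a < 1` for all `a ≠ 0`. -/
def MonOrd.IsLocal {n : ℕ} (o : MonOrd n) : Prop :=
  ∀ a : Fin n →₀ ℕ, a ≠ 0 → o.lt a 0

/-- `o` is degree-compatible: `x^a > x^b` implies `deg x^a ≤ deg x^b`. -/
def MonOrd.IsDegree {n : ℕ} (o : MonOrd n) : Prop :=
  ∀ a b : Fin n →₀ ℕ, o.lt b a → Finsupp.degree a ≤ Finsupp.degree b

/-- Leading-monomial predicate for formal power series: `α` is the exponent of the
leading monomial of `f` with respect to `o`. -/
def IsLMser {K : Type*} [Field K] {n : ℕ} (o : MonOrd n)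
    (f : MvPowerSeries (Fin n) K) (α : Fin n →₀ ℕ) : Prop :=
  MvPowerSeries.coeff α f ≠ 0 ∧
    ∀ β, MvPowerSeries.coeff β f ≠ 0 → β ≠ α → o.lt β α

/-- The maximal ideal `𝔪` of `K[[x₁,…,xₙ]]`. -/
noncomputable def mIdeal (n : ℕ) (K : Type*) [Field K] : Ideal (MvPowerSeries (Fin n) K) :=
  RingHom.ker (MvPowerSeries.constantCoeff (σ := Fin n) (R := K))

/-- `f = Q(g₁,…,g_s)`: for every `d`, `f` agrees with the evaluation at `g` of the
truncation of `Q` below total degree `d`, modulo `𝔪^d`.  (Since the `gᵢ` lie in `𝔪`,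
this is the `𝔪`-adic evaluation of the power series `Q` at `g`.) -/
def IsSubstEval {K : Type*} [Field K] {s n : ℕ} (Q : MvPowerSeries (Fin s) K)
    (g : Fin s → MvPowerSeries (Fin n) K) (f : MvPowerSeries (Fin n) K) : Prop :=
  ∀ d : ℕ, ∀ P : MvPolynomial (Fin s) K,
    (∀ α, Finsupp.degree α < d → P.coeff α = MvPowerSeries.coeff α Q) →
    (∀ α, d ≤ Finsupp.degree α → P.coeff α = 0) →
    f - MvPolynomial.aeval g P ∈ (mIdeal n K) ^ d

/-!
Every nonzero coefficient of `aᵢ • tᵢ` sits at a monomial `β` with `x^β ≤ x^{αᵢ}`, so, the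
ordering being a degree ordering, `deg β ≥ deg αᵢ`: the `i`-th term lies in `𝔪^{deg αᵢ}`.
The `αᵢ` are pairwise distinct and there are only finitely many monomials of each degree, so
`deg αᵢ → ∞`. Hence each coefficient of the partial sums is eventually constant, and the
coefficientwise limit is the `𝔪`-adic limit, because a power series without terms of degree
`< d` lies in `𝔪^d`.
-/

open Filter MvPowerSeries Finsupp

section PowerSeries

variable {σ R : Type*} [CommRing R]

theorem MvPowerSeries.monomial_one_mem_ker_constantCoeff_pow (γ : σ →₀ ℕ) :
    monomial γ (1 : R) ∈ RingHom.ker (constantCoeff (σ := σ) (R := R)) ^ degree γ := by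
  rw [monomial_one_eq, Finsupp.prod, degree_apply, ← Finset.prod_pow_eq_pow_sum]
  exact Ideal.prod_mem_prod fun s _ =>
    Ideal.pow_mem_pow (RingHom.mem_ker.mpr (constantCoeff_X s)) _

theorem MvPowerSeries.mem_ker_constantCoeff_pow_of_coeff_eq_zero [Finite σ] {d : ℕ}
    {f : MvPowerSeries σ R} (hf : ∀ β, degree β < d → coeff β f = 0) :
    f ∈ RingHom.ker (constantCoeff (σ := σ) (R := R)) ^ d := by
  classical
  have hγ (β : σ →₀ ℕ) : ∃ γ, d ≤ degree β → γ ≤ β ∧ degree γ = d := by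
    by_cases h : d ≤ degree β
    · exact (exists_le_degree_eq β d h).imp fun _ hγ _ => hγ
    · exact ⟨0, fun h' => absurd h' h⟩
  choose γ hγ using hγ
  set S := (finite_of_degree_eq (σ := σ) d).toFinset
  -- `f = ∑_{deg δ = d} x^δ q δ`, the term of `f` at `β` going to the summand `δ = γ β`
  let q (δ : σ →₀ ℕ) : MvPowerSeries σ R := fun ε => if γ (δ + ε) = δ then coeff (δ + ε) f else 0
  have hq (δ ε : σ →₀ ℕ) : coeff ε (q δ) = if γ (δ + ε) = δ then coeff (δ + ε) f else 0 := rfl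
  have hsum : f = ∑ δ ∈ S, monomial δ 1 * q δ := by
    ext β
    have hterm (δ : σ →₀ ℕ) : coeff β (monomial δ 1 * q δ) =
        if γ β = δ then (if δ ≤ β then coeff β f else 0) else 0 := by
      rw [coeff_monomial_mul]
      by_cases hδ : δ ≤ β
      · simp [hδ, hq, add_tsub_cancel_of_le hδ]
      · simp [hδ]
    simp only [map_sum, hterm, Finset.sum_ite_eq, S, Set.Finite.mem_toFinset, Set.mem_ofPred_eq]
    by_cases hβ : d ≤ degree β
    · simp [hγ β hβ]
    · simp [hf β (not_le.mp hβ)]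
  rw [hsum]
  refine Ideal.sum_mem _ fun δ hδ => Ideal.mul_mem_right _ _ ?_
  have hδd : degree δ = d := by simpa [S] using hδ
  simpa [hδd] using monomial_one_mem_ker_constantCoeff_pow (R := R) δ

theorem MvPowerSeries.exists_forall_sub_sum_range_mem_ker_constantCoeff_pow [Finite σ]
    (f : ℕ → MvPowerSeries σ R) (e : ℕ → ℕ) (he : Tendsto e atTop atTop)
    (hfe : ∀ i β, degree β < e i → coeff β (f i) = 0) :
    ∃ s : MvPowerSeries σ R, ∀ d : ℕ, ∃ N : ℕ, ∀ m ≥ N,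
      s - ∑ i ∈ Finset.range m, f i ∈ RingHom.ker (constantCoeff (σ := σ) (R := R)) ^ d := by
  let s : MvPowerSeries σ R := fun β => ∑ᶠ i, coeff β (f i)
  refine ⟨s, fun d => ?_⟩
  obtain ⟨N, hN⟩ := eventually_atTop.mp (tendsto_atTop.mp he d)
  refine ⟨N, fun m hm => mem_ker_constantCoeff_pow_of_coeff_eq_zero fun β hβ => ?_⟩
  have hsupp : Function.support (fun i => coeff β (f i)) ⊆ Finset.range m := by
    intro i hi
    by_contra hmi
    exact hi (hfe i β (hβ.trans_le (hN i (hm.trans (by simpa using hmi)))))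
  change ∑ᶠ i, coeff β (f i) - coeff β (∑ i ∈ Finset.range m, f i) = 0
  rw [finsum_eq_sum_of_support_subset _ hsupp, map_sum, sub_self]

end PowerSeries

theorem Finsupp.tendsto_degree_cofinite {σ : Type*} [Finite σ] :
    Tendsto (degree : (σ →₀ ℕ) → ℕ) cofinite atTop :=
  tendsto_atTop.mpr fun d => eventually_cofinite.mpr <| by
    simpa only [not_le] using finite_of_degree_lt d

namespace MonOrd

variable {n : ℕ} (o : MonOrd n) {α : ℕ → (Fin n →₀ ℕ)}

theorem lt_of_lt_of_succ_lt (h : ∀ i, o.lt (α (i + 1)) (α i)) {i j : ℕ} (hij : i < j) :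
    o.lt (α j) (α i) := by
  induction j, hij using Nat.le_induction with
  | base => exact h i
  | succ j _ ih => exact o.trans _ _ _ (h j) ih

theorem injective_of_succ_lt (h : ∀ i, o.lt (α (i + 1)) (α i)) : Function.Injective α :=
  .of_lt_imp_ne fun i j hij hα =>
    o.irrefl (α j) (by simpa only [hα] using o.lt_of_lt_of_succ_lt h hij)

end MonOrd

theorem IsLMser.coeff_eq_zero_of_degree_lt {K : Type*} [Field K] {n : ℕ} {o : MonOrd n}
    (hdeg : o.IsDegree) {f : MvPowerSeries (Fin n) K} {α β : Fin n →₀ ℕ} (hf : IsLMser o f α)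
    (hβ : degree β < degree α) : coeff β f = 0 := by
  by_contra hne
  have hβα : β ≠ α := by rintro rfl; exact lt_irrefl _ hβ
  exact (hdeg α β (hf.2 β hne hβα)).not_gt hβ

theorem partial_sums_of_reduction_chain_converge_general {K : Type*} [Field K] {n : ℕ}
    (o : MonOrd n) (hdeg : o.IsDegree)
    (a : ℕ → K) (t : ℕ → MvPowerSeries (Fin n) K) (α : ℕ → (Fin n →₀ ℕ))
    (hlm : ∀ i, IsLMser o (a i • t i) (α i))
    (hdec : ∀ i, o.lt (α (i + 1)) (α i)) :
    ∃ s : MvPowerSeries (Fin n) K, ∀ d : ℕ, ∃ N : ℕ, ∀ m ≥ N,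
      s - ∑ i ∈ Finset.range m, a i • t i ∈ (mIdeal n K) ^ d := by
  have hdeg_tendsto : Tendsto (fun i => degree (α i)) atTop atTop :=
    tendsto_degree_cofinite.comp
      (Nat.cofinite_eq_atTop ▸ (o.injective_of_succ_lt hdec).tendsto_cofinite)
  exact exists_forall_sub_sum_range_mem_ker_constantCoeff_pow _ _ hdeg_tendsto
    fun i _ hβ => (hlm i).coeff_eq_zero_of_degree_lt hdeg hβ

/-- Along a (possibly infinite) chain of reductions with respect to `G ⊂ 𝔪 \ {0}`,
with strictly decreasing leading monomials `LM(a₁G^{α₁}) > LM(a₂G^{α₂}) > …` for a local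
degree ordering, the sequence of partial sums `s_m = Σ_{i<m} aᵢ G^{αᵢ}` converges in the
`𝔪`-adic topology. -/
theorem partial_sums_of_reduction_chain_converge {K : Type*} [Field K] {n : ℕ}
    (o : MonOrd n) (hloc : o.IsLocal) (hdeg : o.IsDegree)
    (G : Set (MvPowerSeries (Fin n) K))
    (hG : ∀ g ∈ G, g ≠ 0 ∧ MvPowerSeries.constantCoeff (σ := Fin n) (R := K) g = 0)
    (a : ℕ → K) (t : ℕ → MvPowerSeries (Fin n) K) (α : ℕ → (Fin n →₀ ℕ))
    (ha : ∀ i, a i ≠ 0) (ht : ∀ i, t i ∈ Submonoid.closure G)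
    (hlm : ∀ i, IsLMser o (a i • t i) (α i))
    (hdec : ∀ i, o.lt (α (i + 1)) (α i)) :
    ∃ s : MvPowerSeries (Fin n) K, ∀ d : ℕ, ∃ N : ℕ, ∀ m ≥ N,
      s - ∑ i ∈ Finset.range m, a i • t i ∈ (mIdeal n K) ^ d :=
  partial_sums_of_reduction_chain_converge_general o hdeg a t α hlm hdec
end

section
/- Let > be a local degree ordering on K[x_1,...,x_n]_> ⊂ K[[x_1,...,x_n]] and let G = {g_1,...,g_s} ⊂ K[x_1,...,x_n]. If S is a Sasbi basis of the localized subalgebra K[G]_> = (S_> ∩ K[g_1,...,g_s])^{-1} K[g_1,...,g_s], then S is also a Sasbi basis of the complete subalgebra K[[G]] ⊂ K[[x_1,...,x_n]]. -/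
/-- Leading-monomial predicate for polynomials. -/
def IsLM {K : Type*} [Field K] {n : ℕ} (o : MonOrd n)
    (f : MvPolynomial (Fin n) K) (α : Fin n →₀ ℕ) : Prop :=
  f.coeff α ≠ 0 ∧ ∀ β, f.coeff β ≠ 0 → β ≠ α → o.lt β α

/-! For a degree ordering the leading monomial `α` of `f = Q(g)` has minimal total degree in the
support of `f`, so it only depends on `f` modulo `𝔪^(deg α + 1)`. Evaluating at `g` the truncation
of `Q` below degree `deg α + 1` gives a polynomial `p ∈ K[G]` that agrees with `f` there, hence
`LM(p) = α`, and the Sasbi property of `S` on `K[G]` supplies a power product with the same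
leading monomial. -/

theorem MonOrd.IsDegree.lt_of_degree_lt {n : ℕ} {o : MonOrd n} (hdeg : o.IsDegree)
    {α β : Fin n →₀ ℕ} (h : Finsupp.degree α < Finsupp.degree β) : o.lt β α := by
  have hne : β ≠ α := by rintro rfl; exact h.false
  exact (o.total β α hne).resolve_right fun hαβ => (hdeg β α hαβ).not_gt h

theorem MonOrd.exists_max {n : ℕ} (o : MonOrd n) {t : Finset (Fin n →₀ ℕ)} (ht : t.Nonempty) :
    ∃ a ∈ t, ∀ b ∈ t, b ≠ a → o.lt b a := by
  induction t using Finset.induction_on with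
  | empty => simp at ht
  | insert a t hat ih =>
    rcases t.eq_empty_or_nonempty with rfl | htne
    · exact ⟨a, by simp, by simp⟩
    obtain ⟨m, hm, hmax⟩ := ih htne
    have ham : a ≠ m := fun h => hat (h ▸ hm)
    rcases o.total a m ham with ham | hma
    · refine ⟨m, Finset.mem_insert_of_mem hm, fun b hb hbm => ?_⟩
      rcases Finset.mem_insert.mp hb with rfl | hb
      exacts [ham, hmax b hb hbm]
    · refine ⟨a, Finset.mem_insert_self a t, fun b hb hba => ?_⟩
      rcases Finset.mem_insert.mp hb with rfl | hb
      · exact absurd rfl hba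
      rcases eq_or_ne b m with rfl | hbm
      exacts [hma, o.trans _ _ _ (hmax b hb hbm) hma]

theorem IsLM.unique {K : Type*} [Field K] {n : ℕ} {o : MonOrd n} {p : MvPolynomial (Fin n) K}
    {α β : Fin n →₀ ℕ} (hα : IsLM o p α) (hβ : IsLM o p β) : α = β := by
  by_contra hne
  exact o.irrefl α (o.trans _ _ _ (hβ.2 α hα.1 hne) (hα.2 β hβ.1 (Ne.symm hne)))

theorem IsLM.ne_zero {K : Type*} [Field K] {n : ℕ} {o : MonOrd n} {p : MvPolynomial (Fin n) K}
    {α : Fin n →₀ ℕ} (hα : IsLM o p α) : p ≠ 0 := by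
  rintro rfl
  exact hα.1 (MvPolynomial.coeff_zero α)

/-- For a degree ordering, the leading monomial is the greatest monomial of lowest total degree
in the support. -/
theorem exists_isLMser {K : Type*} [Field K] {n : ℕ} {o : MonOrd n} (hdeg : o.IsDegree)
    {f : MvPowerSeries (Fin n) K} (hf : f ≠ 0) : ∃ α, IsLMser o f α := by
  classical
  obtain ⟨β₀, hβ₀, hβ₀_order⟩ :=
    MvPowerSeries.exists_coeff_ne_zero_and_order (MvPowerSeries.ne_zero_iff_order_finite.mp hf)
  set lowest := {β : Fin n →₀ ℕ | Finsupp.degree β = Finsupp.degree β₀ ∧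
    MvPowerSeries.coeff β f ≠ 0}
  have hfin : lowest.Finite :=
    (Finsupp.finite_of_degree_le (Finsupp.degree β₀)).subset fun β hβ => hβ.1.le
  obtain ⟨α, hα, hαmax⟩ := o.exists_max (t := hfin.toFinset) ⟨β₀, by simp [lowest, hβ₀]⟩
  rw [Set.Finite.mem_toFinset] at hα
  refine ⟨α, hα.2, fun β hβ hβα => ?_⟩
  have hle : Finsupp.degree β₀ ≤ Finsupp.degree β := by
    exact_mod_cast hβ₀_order ▸ MvPowerSeries.order_le hβ
  rcases hle.eq_or_lt with heq | hlt
  · exact hαmax β (by simp [lowest, heq, hβ]) hβα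
  · exact hdeg.lt_of_degree_lt (hα.1 ▸ hlt)

theorem le_order_of_mem_mIdeal_pow {K : Type*} [Field K] {n d : ℕ}
    {f : MvPowerSeries (Fin n) K} (hf : f ∈ mIdeal n K ^ d) : (d : ℕ∞) ≤ f.order := by
  induction d generalizing f with
  | zero => simp
  | succ d ih =>
    rw [pow_succ] at hf
    refine Submodule.mul_induction_on hf (fun a ha b hb => ?_) (fun a b ha hb => ?_)
    · have hb : 1 ≤ b.order :=
        MvPowerSeries.one_le_order_iff_constCoeff_eq_zero.mpr (RingHom.mem_ker.mp hb)
      calc ((d + 1 : ℕ) : ℕ∞) = d + 1 := by push_cast; rfl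
        _ ≤ a.order + b.order := add_le_add (ih ha) hb
        _ ≤ (a * b).order := MvPowerSeries.le_order_mul
    · exact (le_min ha hb).trans MvPowerSeries.min_order_le_add

theorem coe_aeval_eq_aeval_coe {K : Type*} [Field K] {n s : ℕ} (g : Fin s → MvPolynomial (Fin n) K)
    (P : MvPolynomial (Fin s) K) :
    ((MvPolynomial.aeval g P : MvPolynomial (Fin n) K) : MvPowerSeries (Fin n) K) =
      MvPolynomial.aeval (fun i => (g i : MvPowerSeries (Fin n) K)) P := by
  have hcoe : ∀ r : MvPolynomial (Fin n) K,
      MvPolynomial.coeToMvPowerSeries.algHom K r = (r : MvPowerSeries (Fin n) K) := fun r => by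
    rw [MvPolynomial.coeToMvPowerSeries.algHom_apply, Algebra.algebraMap_self,
      MvPowerSeries.map_id]
    rfl
  rw [← hcoe, MvPolynomial.comp_aeval_apply]
  simp_rw [hcoe]

theorem IsSubstEval.coeff_aeval_truncTotal {K : Type*} [Field K] {n s : ℕ}
    {Q : MvPowerSeries (Fin s) K} {g : Fin s → MvPolynomial (Fin n) K}
    {f : MvPowerSeries (Fin n) K} (hQ : IsSubstEval Q (fun i => (g i : MvPowerSeries (Fin n) K)) f)
    {d : ℕ} {β : Fin n →₀ ℕ} (hβ : Finsupp.degree β < d) :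
    (MvPolynomial.aeval g (MvPowerSeries.truncTotal d Q)).coeff β = MvPowerSeries.coeff β f := by
  have hmem := hQ d _ (fun γ hγ => MvPowerSeries.coeff_truncTotal Q hγ)
    (fun γ hγ => MvPowerSeries.coeff_truncTotal_eq_zero Q hγ)
  have hcoeff := MvPowerSeries.coeff_of_lt_order
    ((Nat.cast_lt.mpr hβ).trans_le (le_order_of_mem_mIdeal_pow hmem))
  rw [map_sub, sub_eq_zero, ← coe_aeval_eq_aeval_coe, MvPolynomial.coeff_coe] at hcoeff
  exact hcoeff.symm

theorem IsLMser.isLM_of_coeff_eq {K : Type*} [Field K] {n : ℕ} {o : MonOrd n}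
    (hdeg : o.IsDegree) {f : MvPowerSeries (Fin n) K} {p : MvPolynomial (Fin n) K}
    {α : Fin n →₀ ℕ} (hf : IsLMser o f α)
    (hpf : ∀ β, Finsupp.degree β ≤ Finsupp.degree α → p.coeff β = MvPowerSeries.coeff β f) :
    IsLM o p α := by
  refine ⟨hpf α le_rfl ▸ hf.1, fun β hβ hβα => ?_⟩
  rcases le_or_gt (Finsupp.degree β) (Finsupp.degree α) with hle | hlt
  · exact hf.2 β (hpf β hle ▸ hβ) hβα
  · exact hdeg.lt_of_degree_lt hlt

theorem sasbi_of_localization_is_sasbi_of_completion_general {K : Type*} [Field K] {n s : ℕ}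
    (o : MonOrd n) (hdeg : o.IsDegree)
    (g : Fin s → MvPolynomial (Fin n) K)
    (S : Set (MvPowerSeries (Fin n) K))
    -- `S` is a Sasbi basis of `K[G]_>` :
    (hSasbi : ∀ p : MvPolynomial (Fin n) K, p ∈ Algebra.adjoin K (Set.range g) → p ≠ 0 →
        ∃ q ∈ Submonoid.closure S, ∃ α, IsLM o p α ∧ IsLMser o q α) :
    -- `S` is a Sasbi basis of `K[[G]]` :
    ∀ f : MvPowerSeries (Fin n) K,
      (∃ Q, IsSubstEval Q (fun i => ((g i : MvPowerSeries (Fin n) K))) f) → f ≠ 0 →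
      ∃ q ∈ Submonoid.closure S, ∃ α, IsLMser o f α ∧ IsLMser o q α := by
  rintro f ⟨Q, hQ⟩ hf
  obtain ⟨α, hfα⟩ := exists_isLMser hdeg hf
  set p := MvPolynomial.aeval g (MvPowerSeries.truncTotal (Finsupp.degree α + 1) Q)
  have hpG : p ∈ Algebra.adjoin K (Set.range g) := by
    rw [Algebra.adjoin_range_eq_range_aeval]
    exact ⟨_, rfl⟩
  have hpα : IsLM o p α :=
    hfα.isLM_of_coeff_eq hdeg fun β hβ => hQ.coeff_aeval_truncTotal (Nat.lt_succ_of_le hβ)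
  obtain ⟨q, hq, α', hpα', hqα'⟩ := hSasbi p hpG hpα.ne_zero
  exact ⟨q, hq, α, hfα, hpα.unique hpα' ▸ hqα'⟩

/-- If `S` is a Sasbi basis of the localized subalgebra `K[G]_>`
(elements of `K[G]_>` are the power series `f` with `u·f = p` for some `u, p ∈ K[G]`,
`LM(u) = 1`; their leading monomials are exactly those of nonzero elements of `K[G]`),
then `S` is a Sasbi basis of the complete subalgebra `K[[G]]`. -/
theorem sasbi_of_localization_is_sasbi_of_completion {K : Type*} [Field K] {n s : ℕ}
    (o : MonOrd n) (hloc : o.IsLocal) (hdeg : o.IsDegree)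
    (g : Fin s → MvPolynomial (Fin n) K)
    (S : Set (MvPowerSeries (Fin n) K))
    -- `S ⊆ K[G]_>` :
    (hSmem : ∀ f ∈ S, ∃ u p : MvPolynomial (Fin n) K,
        u ∈ Algebra.adjoin K (Set.range g) ∧ p ∈ Algebra.adjoin K (Set.range g) ∧
        IsLM o u 0 ∧ (u : MvPowerSeries (Fin n) K) * f = (p : MvPowerSeries (Fin n) K))
    -- `S` is a Sasbi basis of `K[G]_>` :
    (hSasbi : ∀ p : MvPolynomial (Fin n) K, p ∈ Algebra.adjoin K (Set.range g) → p ≠ 0 →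
        ∃ q ∈ Submonoid.closure S, ∃ α, IsLM o p α ∧ IsLMser o q α) :
    -- `S` is a Sasbi basis of `K[[G]]` :
    ∀ f : MvPowerSeries (Fin n) K,
      (∃ Q, IsSubstEval Q (fun i => ((g i : MvPowerSeries (Fin n) K))) f) → f ≠ 0 →
      ∃ q ∈ Submonoid.closure S, ∃ α, IsLMser o f α ∧ IsLMser o q α :=
  sasbi_of_localization_is_sasbi_of_completion_general o hdeg g S hSasbi
end
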